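/- (Monotonicity of the residual) Let uᵏ ∈ ℝⁿ × ℝᵐ, let ũᵏ be a prediction from uᵏ, let u^{k+1} = uᵏ − M(uᵏ − ũᵏ), and let ũ^{k+1} be a prediction from u^{k+1}. Then ‖M(uᵏ − ũᵏ)‖²_H − ‖M(u^{k+1} − ũ^{k+1})‖²_H ≥ ‖(uᵏ − ũᵏ) − (u^{k+1} − ũ^{k+1})‖²_G; in particular, if r·s > (1−α+α²)·λmax(AᵀA) (so that G is positive definite), then ‖M(u^{k+1} − ũ^{k+1})‖²_H ≤ ‖M(uᵏ − ũᵏ)‖²_H. -/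

import Mathlib

open Matrix

noncomputable section

/-- A primal-dual pair `(x, y) ∈ ℝⁿ × ℝᵐ`. -/
abbrev PDVec (n m : ℕ) := (Fin n → ℝ) × (Fin m → ℝ)

/-- View a primal-dual pair as a single vector indexed by `Fin n ⊕ Fin m`. -/
def pdToVec {n m : ℕ} (u : PDVec n m) : Fin n ⊕ Fin m → ℝ := Sum.elim u.1 u.2

/-- `θ(u) = f(x) + g(y)`. -/
def pdTheta {n m : ℕ} (f : (Fin n → ℝ) → ℝ) (g : (Fin m → ℝ) → ℝ) (u : PDVec n m) : ℝ :=
  f u.1 + g u.2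

/-- `F(u) = (−Aᵀy, Ax)`. -/
def pdF {n m : ℕ} (A : Matrix (Fin m) (Fin n) ℝ) (u : PDVec n m) : PDVec n m :=
  (-(Aᵀ.mulVec u.2), A.mulVec u.1)

/-- `Q = [[r·Iₙ, Aᵀ], [α·A, s·Iₘ]]`. -/
def pdQ {n m : ℕ} (A : Matrix (Fin m) (Fin n) ℝ) (r s α : ℝ) :
    Matrix (Fin n ⊕ Fin m) (Fin n ⊕ Fin m) ℝ :=
  Matrix.fromBlocks (r • 1) Aᵀ (α • A) (s • 1)

/-- `M = [[Iₙ, 0], [−((1−α)/s)·A, Iₘ]]`. -/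
def pdM {n m : ℕ} (A : Matrix (Fin m) (Fin n) ℝ) (s α : ℝ) :
    Matrix (Fin n ⊕ Fin m) (Fin n ⊕ Fin m) ℝ :=
  Matrix.fromBlocks 1 0 (-(((1 - α) / s) • A)) 1

/-- `H = [[r·Iₙ + ((1−α)/s)·AᵀA, Aᵀ], [A, s·Iₘ]]`. -/
def pdH {n m : ℕ} (A : Matrix (Fin m) (Fin n) ℝ) (r s α : ℝ) :
    Matrix (Fin n ⊕ Fin m) (Fin n ⊕ Fin m) ℝ :=
  Matrix.fromBlocks (r • 1 + ((1 - α) / s) • (Aᵀ * A)) Aᵀ A (s • 1)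

/-- `G = [[r·Iₙ + (α(1−α)/s)·AᵀA, Aᵀ], [A, s·Iₘ]]`. -/
def pdG {n m : ℕ} (A : Matrix (Fin m) (Fin n) ℝ) (r s α : ℝ) :
    Matrix (Fin n ⊕ Fin m) (Fin n ⊕ Fin m) ℝ :=
  Matrix.fromBlocks (r • 1 + ((α * (1 - α)) / s) • (Aᵀ * A)) Aᵀ A (s • 1)

/-- `‖v‖²_S = vᵀ S v`. -/
def pdNormSq {k : Type*} [Fintype k] (S : Matrix k k ℝ) (v : k → ℝ) : ℝ :=
  v ⬝ᵥ S.mulVec v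

/-- `ut` is a prediction from `uk`: its first component minimizes
`x ↦ f(x) − (yᵏ)ᵀAx + (r/2)‖x − xᵏ‖²` over `X`, and its second component minimizes
`y ↦ g(y) + yᵀA(x̃ᵏ + α(x̃ᵏ − xᵏ)) + (s/2)‖y − yᵏ‖²` over `Y`. -/
def IsPrediction {n m : ℕ} (X : Set (Fin n → ℝ)) (Y : Set (Fin m → ℝ))
    (f : (Fin n → ℝ) → ℝ) (g : (Fin m → ℝ) → ℝ)
    (A : Matrix (Fin m) (Fin n) ℝ) (r s α : ℝ) (uk ut : PDVec n m) : Prop :=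
  ut.1 ∈ X ∧
  (∀ x ∈ X,
      f ut.1 - uk.2 ⬝ᵥ A.mulVec ut.1 + r / 2 * ((ut.1 - uk.1) ⬝ᵥ (ut.1 - uk.1)) ≤
        f x - uk.2 ⬝ᵥ A.mulVec x + r / 2 * ((x - uk.1) ⬝ᵥ (x - uk.1))) ∧
  ut.2 ∈ Y ∧
  (∀ y ∈ Y,
      g ut.2 + ut.2 ⬝ᵥ A.mulVec (ut.1 + α • (ut.1 - uk.1)) +
          s / 2 * ((ut.2 - uk.2) ⬝ᵥ (ut.2 - uk.2)) ≤
        g y + y ⬝ᵥ A.mulVec (ut.1 + α • (ut.1 - uk.1)) +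
          s / 2 * ((y - uk.2) ⬝ᵥ (y - uk.2)))

/-- The solution set `Ω*` of the variational inequality `VI(Ω, F, θ)`. -/
def VISol {n m : ℕ} (X : Set (Fin n → ℝ)) (Y : Set (Fin m → ℝ))
    (f : (Fin n → ℝ) → ℝ) (g : (Fin m → ℝ) → ℝ)
    (A : Matrix (Fin m) (Fin n) ℝ) : Set (PDVec n m) :=
  {u | u.1 ∈ X ∧ u.2 ∈ Y ∧
    ∀ v : PDVec n m, v.1 ∈ X → v.2 ∈ Y →
      pdTheta f g v - pdTheta f g u + (pdToVec v - pdToVec u) ⬝ᵥ pdToVec (pdF A u) ≥ 0}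

/-!
Each prediction is a proximal step, so `ũᵏ` satisfies the variational inequality
`θ(u) - θ(ũᵏ) + (u - ũᵏ)ᵀ F(ũᵏ) ≥ (u - ũᵏ)ᵀ Q (uᵏ - ũᵏ)` on `Ω`. Testing it at `ũᵏ⁺¹`, testing
the one for step `k + 1` at `ũᵏ` and adding, `θ` cancels and `F` drops out by skew-symmetry:
with `wᵏ = uᵏ - ũᵏ`, `(ũᵏ - ũᵏ⁺¹)ᵀ Q (wᵏ - wᵏ⁺¹) ≥ 0`. The correction step gives
`ũᵏ - ũᵏ⁺¹ = M wᵏ - (wᵏ - wᵏ⁺¹)`, and the identities `H M = Q`, `G + Mᵀ Q = Q + Qᵀ` turn this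
into the claimed inequality. When `r s > (1 - α + α²) λmax(AᵀA)`, completing the square in the
`y`-block and the Rayleigh bound `‖A x‖² ≤ λmax ‖x‖²` show that `‖·‖²_G` is nonnegative.
-/

open Filter Topology

theorem nonneg_of_forall_mem_Ioc_add_mul {c K : ℝ} (h : ∀ t ∈ Set.Ioc (0 : ℝ) 1, 0 ≤ c + t * K) :
    0 ≤ c := by
  have hlim : Tendsto (fun t : ℝ => c + t * K) (𝓝[>] 0) (𝓝 c) := by
    have hcont : Continuous fun t : ℝ => c + t * K := by fun_prop
    simpa using (hcont.tendsto 0).mono_left nhdsWithin_le_nhds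
  exact ge_of_tendsto hlim (eventually_of_mem (Ioc_mem_nhdsGT zero_lt_one) h)

theorem ConvexOn.prox_variational_inequality {ι : Type*} [Fintype ι] {X : Set (ι → ℝ)}
    {φ : (ι → ℝ) → ℝ} (hφ : ConvexOn ℝ X φ) {ρ : ℝ} {x₀ z : ι → ℝ} (hz : z ∈ X)
    (hmin : IsMinOn (fun x => φ x + ρ / 2 * ((x - x₀) ⬝ᵥ (x - x₀))) X z)
    {x : ι → ℝ} (hx : x ∈ X) :
    ρ * ((x - z) ⬝ᵥ (x₀ - z)) ≤ φ x - φ z := by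
  set v := x - z
  suffices ∀ t ∈ Set.Ioc (0 : ℝ) 1,
      0 ≤ φ x - φ z - ρ * (v ⬝ᵥ (x₀ - z)) + t * (ρ / 2 * (v ⬝ᵥ v)) by
    linarith [nonneg_of_forall_mem_Ioc_add_mul this]
  rintro t ⟨ht0, ht1⟩
  have hcomb : (1 - t) • z + t • x = z + t • v := by
    ext i; simp only [v, Pi.add_apply, Pi.smul_apply, Pi.sub_apply, smul_eq_mul]; ring
  have hconv : φ (z + t • v) ≤ (1 - t) * φ z + t * φ x := by
    simpa [hcomb] using hφ.2 hz hx (sub_nonneg.2 ht1) ht0.le (sub_add_cancel 1 t)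
  have hmem : z + t • v ∈ X := hcomb ▸ hφ.1 hz hx (sub_nonneg.2 ht1) ht0.le (sub_add_cancel 1 t)
  have hsq : (z + t • v - x₀) ⬝ᵥ (z + t • v - x₀) =
      (z - x₀) ⬝ᵥ (z - x₀) - 2 * t * (v ⬝ᵥ (x₀ - z)) + t ^ 2 * (v ⬝ᵥ v) := by
    have : z + t • v - x₀ = t • v - (x₀ - z) := by abel
    rw [this]
    simp only [dotProduct_sub, sub_dotProduct, dotProduct_smul, smul_dotProduct, smul_eq_mul,
      dotProduct_comm (x₀ - z) v]
    ring
  have hle := isMinOn_iff.mp hmin _ hmem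
  simp only [hsq] at hle
  have hscaled : 0 ≤ t * (φ x - φ z - ρ * (v ⬝ᵥ (x₀ - z)) + t * (ρ / 2 * (v ⬝ᵥ v))) := by
    nlinarith
  exact nonneg_of_mul_nonneg_right hscaled ht0

theorem Matrix.IsHermitian.dotProduct_mulVec_le_iSup_eigenvalues_mul {ι : Type*} [Fintype ι]
    [DecidableEq ι] {B : Matrix ι ι ℝ} (hB : B.IsHermitian) (x : ι → ℝ) :
    x ⬝ᵥ B *ᵥ x ≤ (⨆ i, hB.eigenvalues i) * (x ⬝ᵥ x) := by
  set U : Matrix ι ι ℝ := (hB.eigenvectorUnitary : Matrix ι ι ℝ)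
  have hstar : star U = Uᵀ := by simp [star_eq_conjTranspose]
  have hUUt : U * Uᵀ = 1 := by
    rw [← hstar]; exact (Unitary.mem_iff.mp hB.eigenvectorUnitary.2).2
  have hspec : B = U * diagonal hB.eigenvalues * Uᵀ := by
    rw [← hstar]
    simpa [Unitary.conjStarAlgAut_apply] using hB.spectral_theorem
  set y := Uᵀ *ᵥ x
  have hxx : x ⬝ᵥ x = y ⬝ᵥ y := by
    calc x ⬝ᵥ x = x ⬝ᵥ (U * Uᵀ) *ᵥ x := by rw [hUUt, one_mulVec]
      _ = y ⬝ᵥ y := by rw [← mulVec_mulVec, dotProduct_mulVec, ← mulVec_transpose]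
  have hxBx : x ⬝ᵥ B *ᵥ x = ∑ i, hB.eigenvalues i * (y i * y i) := by
    conv_lhs => rw [hspec]
    rw [← mulVec_mulVec, ← mulVec_mulVec, dotProduct_mulVec, ← mulVec_transpose]
    simp only [dotProduct, mulVec_diagonal]
    exact Finset.sum_congr rfl fun i _ => by ring
  rw [hxBx, hxx, dotProduct, Finset.mul_sum]
  gcongr with i
  · exact mul_self_nonneg _
  · exact le_ciSup (Set.finite_range _).bddAbove i

theorem pdNormSq_sub_of_transpose_eq {ι : Type*} [Fintype ι] {H : Matrix ι ι ℝ} (hH : Hᵀ = H)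
    (a b : ι → ℝ) :
    pdNormSq H (a - b) = pdNormSq H a - 2 * (a ⬝ᵥ H *ᵥ b) + pdNormSq H b := by
  have hba : b ⬝ᵥ H *ᵥ a = a ⬝ᵥ H *ᵥ b := by
    rw [← dotProduct_transpose_mulVec, hH]
  simp only [pdNormSq, mulVec_sub, dotProduct_sub, sub_dotProduct, hba]
  ring

theorem pdNormSq_decrease_of_crossing {ι : Type*} [Fintype ι] {Q M H G : Matrix ι ι ℝ}
    (hHM : H * M = Q) (hH : Hᵀ = H) (hG : G + Mᵀ * Q = Q + Qᵀ) {w d : ι → ℝ}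
    (hcross : 0 ≤ (M *ᵥ w - d) ⬝ᵥ Q *ᵥ d) :
    pdNormSq H (M *ᵥ w) - pdNormSq H (M *ᵥ (w - d)) ≥ pdNormSq G d := by
  -- `H (M d) = Q d` turns every `H`-form into a `Q`-form; what is left is `2 (M w - d)ᵀ Q d`.
  have hHMd : H *ᵥ (M *ᵥ d) = Q *ᵥ d := by rw [mulVec_mulVec, hHM]
  have hMd : pdNormSq H (M *ᵥ d) = d ⬝ᵥ (Mᵀ * Q) *ᵥ d := by
    rw [pdNormSq, hHMd, ← mulVec_mulVec, dotProduct_transpose_mulVec, dotProduct_comm]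
  have hGd : pdNormSq G d = 2 * (d ⬝ᵥ Q *ᵥ d) - d ⬝ᵥ (Mᵀ * Q) *ᵥ d := by
    rw [pdNormSq, eq_sub_of_add_eq hG, sub_mulVec, add_mulVec, dotProduct_sub, dotProduct_add,
      dotProduct_transpose_mulVec]
    ring
  rw [mulVec_sub, pdNormSq_sub_of_transpose_eq hH, hHMd, hMd, hGd]
  simp only [sub_dotProduct] at hcross
  linarith

section PrimalDual

variable {n m : ℕ}

theorem pdToVec_sub (u v : PDVec n m) : pdToVec (u - v) = pdToVec u - pdToVec v := by
  ext (i | j) <;> rfl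

theorem pdToVec_dotProduct_pdToVec (u v : PDVec n m) :
    pdToVec u ⬝ᵥ pdToVec v = u.1 ⬝ᵥ v.1 + u.2 ⬝ᵥ v.2 :=
  sumElim_dotProduct_sumElim ..

theorem fromBlocks_mulVec_pdToVec (P : Matrix (Fin n) (Fin n) ℝ) (Q : Matrix (Fin n) (Fin m) ℝ)
    (R : Matrix (Fin m) (Fin n) ℝ) (S : Matrix (Fin m) (Fin m) ℝ) (u : PDVec n m) :
    fromBlocks P Q R S *ᵥ pdToVec u = pdToVec (P *ᵥ u.1 + Q *ᵥ u.2, R *ᵥ u.1 + S *ᵥ u.2) :=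
  fromBlocks_mulVec ..

theorem pdF_sub (A : Matrix (Fin m) (Fin n) ℝ) (u v : PDVec n m) :
    pdF A (u - v) = pdF A u - pdF A v := by
  simp only [pdF, Prod.fst_sub, Prod.snd_sub, mulVec_sub, Prod.mk_sub_mk, neg_sub_neg, neg_sub]

theorem pdToVec_dotProduct_pdF_self (A : Matrix (Fin m) (Fin n) ℝ) (u : PDVec n m) :
    pdToVec u ⬝ᵥ pdToVec (pdF A u) = 0 := by
  rw [pdToVec_dotProduct_pdToVec, pdF, dotProduct_neg, dotProduct_transpose_mulVec,
    neg_add_cancel]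

variable {X : Set (Fin n → ℝ)} {Y : Set (Fin m → ℝ)} {f : (Fin n → ℝ) → ℝ}
  {g : (Fin m → ℝ) → ℝ} {A : Matrix (Fin m) (Fin n) ℝ} {r s α : ℝ}

theorem IsPrediction.variational_inequality (hX : Convex ℝ X) (hY : Convex ℝ Y)
    (hf : ConvexOn ℝ X f) (hg : ConvexOn ℝ Y g) {uk ut : PDVec n m}
    (hpred : IsPrediction X Y f g A r s α uk ut) {v : PDVec n m} (hvX : v.1 ∈ X) (hvY : v.2 ∈ Y) :
    (pdToVec v - pdToVec ut) ⬝ᵥ pdQ A r s α *ᵥ (pdToVec uk - pdToVec ut) ≤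
      pdTheta f g v - pdTheta f g ut + (pdToVec v - pdToVec ut) ⬝ᵥ pdToVec (pdF A ut) := by
  obtain ⟨hutX, hminX, hutY, hminY⟩ := hpred
  have hx := (hf.sub ((dotProductBilin ℝ ℝ uk.2 ∘ₗ A.mulVecLin).concaveOn hX))
    |>.prox_variational_inequality hutX (isMinOn_iff.2 hminX) hvX
  have hy := (hg.add (((dotProductBilin ℝ ℝ).flip
      (A *ᵥ (ut.1 + α • (ut.1 - uk.1)))).convexOn hY)).prox_variational_inequality hutY
    (isMinOn_iff.2 hminY) hvY
  simp only [Pi.sub_apply, Pi.add_apply, LinearMap.comp_apply, LinearMap.flip_apply,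
    dotProductBilin_apply_apply, mulVecLin_apply] at hx hy
  rw [← pdToVec_sub, ← pdToVec_sub, pdQ, fromBlocks_mulVec_pdToVec, pdToVec_dotProduct_pdToVec,
    pdToVec_dotProduct_pdToVec]
  simp only [pdTheta, pdF, Prod.fst_sub, Prod.snd_sub, dotProduct_transpose_mulVec, mulVec_add,
    mulVec_sub, mulVec_smul, smul_mulVec, one_mulVec, dotProduct_add, dotProduct_sub,
    sub_dotProduct, dotProduct_smul, smul_eq_mul, dotProduct_neg] at hx hy ⊢
  linarith

theorem IsPrediction.crossing (hX : Convex ℝ X) (hY : Convex ℝ Y) (hf : ConvexOn ℝ X f)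
    (hg : ConvexOn ℝ Y g) {uk ut uk' ut' : PDVec n m} (h : IsPrediction X Y f g A r s α uk ut)
    (h' : IsPrediction X Y f g A r s α uk' ut') :
    0 ≤ (pdToVec ut - pdToVec ut') ⬝ᵥ
      pdQ A r s α *ᵥ ((pdToVec uk - pdToVec ut) - (pdToVec uk' - pdToVec ut')) := by
  have hvi := h.variational_inequality hX hY hf hg h'.1 h'.2.2.1
  have hvi' := h'.variational_inequality hX hY hf hg h.1 h.2.2.1
  -- The `θ`-terms cancel, and the `F`-terms cancel since `F` is linear and skew.
  have hskew := pdToVec_dotProduct_pdF_self A (ut - ut')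
  rw [pdF_sub, pdToVec_sub, pdToVec_sub] at hskew
  simp only [pdTheta, mulVec_sub, dotProduct_sub, sub_dotProduct] at hvi hvi' hskew ⊢
  linarith

end PrimalDual

section Blocks

variable {n m : ℕ} (A : Matrix (Fin m) (Fin n) ℝ) (r : ℝ) {s : ℝ} (α : ℝ)

theorem pdH_mul_pdM (hs : s ≠ 0) : pdH A r s α * pdM A s α = pdQ A r s α := by
  have hscal : (1 - α) / s * s = 1 - α := div_mul_cancel₀ _ hs
  rw [pdH, pdM, pdQ, fromBlocks_multiply]
  congr 1
  · simp [Matrix.mul_smul]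
  · simp
  · simp [Matrix.mul_smul, smul_smul, hscal]
    module
  · simp

theorem pdH_transpose : (pdH A r s α)ᵀ = pdH A r s α := by
  rw [pdH, fromBlocks_transpose]
  simp [transpose_add, transpose_smul, transpose_mul]

theorem pdG_add_transpose_pdM_mul_pdQ (hs : s ≠ 0) :
    pdG A r s α + (pdM A s α)ᵀ * pdQ A r s α = pdQ A r s α + (pdQ A r s α)ᵀ := by
  have hscal : s * ((1 - α) / s) = 1 - α := mul_div_cancel₀ _ hs
  rw [pdG, pdM, pdQ, fromBlocks_transpose, fromBlocks_transpose, fromBlocks_multiply,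
    fromBlocks_add, fromBlocks_add]
  congr 1
  · simp [Matrix.mul_smul, smul_smul, mul_div_assoc]
    abel
  · simp only [transpose_one, Matrix.one_mul, transpose_neg, transpose_smul,
      Matrix.mul_smul, Matrix.mul_one, smul_neg, smul_smul, hscal]
    module
  · simp [add_comm]
  · simp

end Blocks

theorem pdNormSq_pdG_nonneg {n m : ℕ} {A : Matrix (Fin m) (Fin n) ℝ} {r s α : ℝ} (hs : 0 < s)
    (hA : (Aᵀ * A).IsHermitian) (h : (1 - α + α ^ 2) * (⨆ i, hA.eigenvalues i) < r * s)
    (d : PDVec n m) :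
    0 ≤ pdNormSq (pdG A r s α) (pdToVec d) := by
  obtain ⟨p, q⟩ := d
  have hAp : (A *ᵥ p) ⬝ᵥ (A *ᵥ p) ≤ (⨆ i, hA.eigenvalues i) * (p ⬝ᵥ p) := by
    simpa [← mulVec_mulVec, dotProduct_transpose_mulVec] using
      hA.dotProduct_mulVec_le_iSup_eigenvalues_mul p
  have hp : 0 ≤ p ⬝ᵥ p := Fintype.sum_nonneg fun _ => mul_self_nonneg _
  have hsq : 0 ≤ (s • q + A *ᵥ p) ⬝ᵥ (s • q + A *ᵥ p) :=
    Fintype.sum_nonneg fun _ => mul_self_nonneg _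
  have hc : 0 < 1 - α + α ^ 2 := by nlinarith [sq_nonneg (2 * α - 1)]
  rw [pdNormSq, pdG, fromBlocks_mulVec_pdToVec, pdToVec_dotProduct_pdToVec]
  simp only [add_mulVec, smul_mulVec, one_mulVec, ← mulVec_mulVec, dotProduct_add, add_dotProduct,
    dotProduct_smul, smul_dotProduct, smul_eq_mul, dotProduct_transpose_mulVec,
    dotProduct_comm q (A *ᵥ p)] at hsq ⊢
  rw [← mul_nonneg_iff_of_pos_left hs]
  have hcancel :
      s * (α * (1 - α) / s * (A *ᵥ p ⬝ᵥ A *ᵥ p)) = α * (1 - α) * (A *ᵥ p ⬝ᵥ A *ᵥ p) := by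
    field_simp
  nlinarith [mul_le_mul_of_nonneg_left hAp hc.le, mul_le_mul_of_nonneg_right h.le hp]

theorem stmt_13_general (n m : ℕ)
    (X : Set (Fin n → ℝ)) (Y : Set (Fin m → ℝ)) (hXcv : Convex ℝ X) (hYcv : Convex ℝ Y)
    (f : (Fin n → ℝ) → ℝ) (g : (Fin m → ℝ) → ℝ)
    (hf : ConvexOn ℝ Set.univ f) (hg : ConvexOn ℝ Set.univ g)
    (A : Matrix (Fin m) (Fin n) ℝ) (r s α : ℝ) (hs : 0 < s)
    (hA : (Aᵀ * A).IsHermitian)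
    (uk utk uk1 utk1 : PDVec n m)
    (hpredk : IsPrediction X Y f g A r s α uk utk)
    (hcorr : pdToVec uk1 = pdToVec uk - (pdM A s α).mulVec (pdToVec uk - pdToVec utk))
    (hpredk1 : IsPrediction X Y f g A r s α uk1 utk1) :
    pdNormSq (pdH A r s α) ((pdM A s α).mulVec (pdToVec uk - pdToVec utk)) -
        pdNormSq (pdH A r s α) ((pdM A s α).mulVec (pdToVec uk1 - pdToVec utk1)) ≥
      pdNormSq (pdG A r s α)
        ((pdToVec uk - pdToVec utk) - (pdToVec uk1 - pdToVec utk1)) ∧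
    ((1 - α + α ^ 2) * (⨆ i, hA.eigenvalues i) < r * s →
      pdNormSq (pdH A r s α) ((pdM A s α).mulVec (pdToVec uk1 - pdToVec utk1)) ≤
        pdNormSq (pdH A r s α) ((pdM A s α).mulVec (pdToVec uk - pdToVec utk))) := by
  have hcross := hpredk.crossing hXcv hYcv (hf.subset (Set.subset_univ X) hXcv)
    (hg.subset (Set.subset_univ Y) hYcv) hpredk1
  have hpred_diff : pdToVec utk - pdToVec utk1 = pdM A s α *ᵥ (pdToVec uk - pdToVec utk) -
      ((pdToVec uk - pdToVec utk) - (pdToVec uk1 - pdToVec utk1)) := by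
    rw [hcorr]; abel
  rw [hpred_diff] at hcross
  have hdecrease := pdNormSq_decrease_of_crossing (pdH_mul_pdM A r α hs.ne')
    (pdH_transpose A r α) (pdG_add_transpose_pdM_mul_pdQ A r α hs.ne') hcross
  rw [sub_sub_cancel] at hdecrease
  refine ⟨hdecrease, fun hrs => ?_⟩
  have hG := pdNormSq_pdG_nonneg hs hA hrs ((uk - utk) - (uk1 - utk1))
  rw [pdToVec_sub, pdToVec_sub, pdToVec_sub] at hG
  linarith

/-- Monotonicity of the residual `‖M(uᵏ − ũᵏ)‖²_H` (5.4). -/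
theorem stmt_13 (n m : ℕ) (hn : 0 < n) (hm : 0 < m)
    (X : Set (Fin n → ℝ)) (Y : Set (Fin m → ℝ))
    (hXne : X.Nonempty) (hXcl : IsClosed X) (hXcv : Convex ℝ X)
    (hYne : Y.Nonempty) (hYcl : IsClosed Y) (hYcv : Convex ℝ Y)
    (f : (Fin n → ℝ) → ℝ) (g : (Fin m → ℝ) → ℝ)
    (hf : ConvexOn ℝ Set.univ f) (hg : ConvexOn ℝ Set.univ g)
    (A : Matrix (Fin m) (Fin n) ℝ) (r s α : ℝ) (hr : 0 < r) (hs : 0 < s)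
    (hA : (Aᵀ * A).IsHermitian)
    (uk utk uk1 utk1 : PDVec n m)
    (hpredk : IsPrediction X Y f g A r s α uk utk)
    (hcorr : pdToVec uk1 = pdToVec uk - (pdM A s α).mulVec (pdToVec uk - pdToVec utk))
    (hpredk1 : IsPrediction X Y f g A r s α uk1 utk1) :
    pdNormSq (pdH A r s α) ((pdM A s α).mulVec (pdToVec uk - pdToVec utk)) -
        pdNormSq (pdH A r s α) ((pdM A s α).mulVec (pdToVec uk1 - pdToVec utk1)) ≥
      pdNormSq (pdG A r s α)
        ((pdToVec uk - pdToVec utk) - (pdToVec uk1 - pdToVec utk1)) ∧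
    ((1 - α + α ^ 2) * (⨆ i, hA.eigenvalues i) < r * s →
      pdNormSq (pdH A r s α) ((pdM A s α).mulVec (pdToVec uk1 - pdToVec utk1)) ≤
        pdNormSq (pdH A r s α) ((pdM A s α).mulVec (pdToVec uk - pdToVec utk))) :=
  stmt_13_general n m X Y hXcv hYcv f g hf hg A r s α hs hA uk utk uk1 utk1 hpredk hcorr hpredk1
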